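/- Neither Slice nor Space is monoidal under intersection of objects and morphisms: if X and Y are causally connected slices (C[X,Y] ≠ ∅) with X ∩ Y = ∅, then 1_X ⊗ 1_Y := C[X,X] ∩ C[Y,Y] ≠ ∅ while 1_{X ∩ Y} = 1_∅ = ∅, so the proposed tensor fails to preserve identities. -/

import Mathlib

/-- An abstract setting of "points" and (future-directed causal) "curves",
where a curve is presented by a parametrised path. -/
structure CausalSpace where
  Point : Type
  topology : TopologicalSpace Point
  Curve : Type
  dom : Curve → Set ℝ
  map : Curve → ℝ → Point

namespace CausalSpace

variable (G : CausalSpace)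

/-- `γ` passes through `A` and then `B`. -/
def Passes (A B : Set G.Point) (γ : G.Curve) : Prop :=
  (∃ q ∈ G.dom γ, G.map γ q ∈ B) ∧
    ∀ q ∈ G.dom γ, G.map γ q ∈ B → ∃ p ∈ G.dom γ, p ≤ q ∧ G.map γ p ∈ A

/-- `C[A,B]`: the set of curves passing through `A` and then `B`. -/
def thru (A B : Set G.Point) : Set G.Curve := {γ | G.Passes A B γ}

/-- Causal precedence: some future-directed causal curve goes from `x` to `y`. -/
def Prec (x y : G.Point) : Prop :=
  ∃ γ : G.Curve, ∃ p ∈ G.dom γ, ∃ q ∈ G.dom γ, p ≤ q ∧ G.map γ p = x ∧ G.map γ q = y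

/-- A set is spacelike when no two distinct points of it are causally related. -/
def Spacelike (A : Set G.Point) : Prop :=
  ∀ x ∈ A, ∀ y ∈ A, x ≠ y → ¬ G.Prec x y

end CausalSpace

/-- A spacelike slice: a closed spacelike subset. -/
structure Slice (G : CausalSpace) where
  carrier : Set G.Point
  spacelike : G.Spacelike carrier
  closed : @IsClosed G.Point G.topology carrier

namespace CausalSpace

variable {G : CausalSpace}

theorem mem_thru_self_iff {A : Set G.Point} {γ : G.Curve} :
    γ ∈ G.thru A A ↔ ∃ q ∈ G.dom γ, G.map γ q ∈ A :=
  ⟨fun h => h.1, fun h => ⟨h, fun q hq hqA => ⟨q, hq, le_rfl, hqA⟩⟩⟩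

theorem thru_subset_thru_self_right (A B : Set G.Point) : G.thru A B ⊆ G.thru B B :=
  fun _ h => mem_thru_self_iff.2 h.1

theorem thru_subset_thru_self_left (A B : Set G.Point) : G.thru A B ⊆ G.thru A A := by
  rintro γ ⟨⟨q, hq, hqB⟩, hA⟩
  obtain ⟨p, hp, -, hpA⟩ := hA q hq hqB
  exact mem_thru_self_iff.2 ⟨p, hp, hpA⟩

theorem thru_subset_inter_thru_self (A B : Set G.Point) :
    G.thru A B ⊆ G.thru A A ∩ G.thru B B :=
  Set.subset_inter (thru_subset_thru_self_left A B) (thru_subset_thru_self_right A B)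

@[simp]
theorem thru_empty_right (A : Set G.Point) : G.thru A ∅ = ∅ :=
  Set.eq_empty_of_forall_notMem fun _ ⟨⟨_, _, hq⟩, _⟩ => hq

end CausalSpace

/-- Neither `Slice` nor `Space` is monoidal under intersection: if `X` and `Y`
are causally connected slices (`C[X,Y] ≠ ∅`) with `X ∩ Y = ∅`, then
`1_X ⊗ 1_Y = C[X,X] ∩ C[Y,Y] ≠ ∅` while `1_{X ∩ Y} = 1_∅ = ∅`. -/
theorem intersection_not_monoidal (G : CausalSpace) (X Y : Slice G)
    (hconn : G.thru X.carrier Y.carrier ≠ ∅)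
    (hdisj : X.carrier ∩ Y.carrier = ∅) :
    G.thru X.carrier X.carrier ∩ G.thru Y.carrier Y.carrier ≠ ∅ ∧
    G.thru (X.carrier ∩ Y.carrier) (X.carrier ∩ Y.carrier) = ∅ := by
  refine ⟨?_, by rw [hdisj, CausalSpace.thru_empty_right]⟩
  rw [← Set.nonempty_iff_ne_empty] at hconn ⊢
  exact hconn.mono (CausalSpace.thru_subset_inter_thru_self _ _)
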